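/- Extremal welfare values over the lower-bound family: Fix λ ∈ (0,1). Then min_{ε ∈ [−1,1]} min( W^ε(1/4), W^ε(1) ) = W^1(1/4), max_{ε ∈ [−1,1]} max_{x ∈ (1/2, 3/4]} W^ε(x) = W^{−1}(3/4), and W^1(1/4) − W^{−1}(3/4) = (1/8)·(1−λ)/(4−3λ) > 0. -/

import Mathlib

/-! Welfare is linear in the measure, and a unit atom at `p ≤ 1` has welfare `x + λ(p - x)` for
`x ≤ p` and `0` otherwise (`atomWelfare`). So `W^ε(1) = 1 - a - 2b` does not depend on `ε`, while
`W^ε(1/4)` decreases in `ε`, with `W^1(1/4) = (1 - a - 2b) - λ(1 - λ)/(8(24 - 17λ))`. On `(1/2, 3/4]`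
only the atoms at `3/4` and `1` contribute, so there `W^ε(x)` increases in `x` (as `λ ≤ 1`) and
decreases in `ε`. -/

open Set MeasureTheory

/-- Demand function of a Borel probability measure `μ` on `[0,1]`:
`D_μ(x) = μ({v : v ≥ x})`. -/
noncomputable def Dem (μ : Measure ℝ) (x : ℝ) : ℝ := (μ {v | x ≤ v}).toReal

/-- Expected social welfare: `W_μ(x) = x·D_μ(x) + λ·∫_x^1 D_μ(t) dt`. -/
noncomputable def EW (lam : ℝ) (μ : Measure ℝ) (x : ℝ) : ℝ :=
  x * Dem μ x + lam * ∫ t in x..1, Dem μ t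

/-- `a(λ)` from the lower-bound construction. -/
noncomputable def aC (lam : ℝ) : ℝ :=
  (1 - lam) * (136 - 99 * lam) / (2 * (4 - 3 * lam) * (24 - 17 * lam))

/-- `b(λ)` from the lower-bound construction. -/
noncomputable def bC (lam : ℝ) : ℝ := (1 - lam) / (2 * (24 - 17 * lam))

/-- The measure `μ^ε` on `[0,1]` with atoms at `1/4, 1/2, 3/4, 1` of masses
`a, (1+ε)b, (1−ε)b, 1−a−2b` respectively. -/
noncomputable def muEps (lam ε : ℝ) : Measure ℝ :=
  ENNReal.ofReal (aC lam) • Measure.dirac (1/4)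
    + ENNReal.ofReal ((1 + ε) * bC lam) • Measure.dirac (1/2)
    + ENNReal.ofReal ((1 - ε) * bC lam) • Measure.dirac (3/4)
    + ENNReal.ofReal (1 - aC lam - 2 * bC lam) • Measure.dirac 1

theorem ciSup₂_eq_of_forall_le {α ι κ : Type*} [ConditionallyCompleteLattice α]
    {f : ι → κ → α} (i₀ : ι) (j₀ : κ) (h : ∀ i j, f i j ≤ f i₀ j₀) :
    ⨆ i, ⨆ j, f i j = f i₀ j₀ := by
  have : Nonempty ι := ⟨i₀⟩
  have : Nonempty κ := ⟨j₀⟩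
  refine le_antisymm (ciSup_le fun i => ciSup_le (h i)) ?_
  exact le_ciSup_of_le ⟨f i₀ j₀, forall_mem_range.2 fun i => ciSup_le (h i)⟩ i₀
    (le_ciSup ⟨f i₀ j₀, forall_mem_range.2 (h i₀)⟩ j₀)

theorem intervalIntegral_eq_of_forall_mem_uIoc {f : ℝ → ℝ} {a b c : ℝ}
    (h : ∀ t ∈ uIoc a b, f t = c) : ∫ t in a..b, f t = (b - a) * c := by
  rw [intervalIntegral.integral_congr_ae (ae_of_all _ h), intervalIntegral.integral_const,
    smul_eq_mul]

instance isFiniteMeasure_ofReal_smul {α : Type*} [MeasurableSpace α] (m : ℝ) (μ : Measure α)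
    [IsFiniteMeasure μ] : IsFiniteMeasure (ENNReal.ofReal m • μ) :=
  μ.smul_finite ENNReal.ofReal_ne_top

theorem Dem_add (μ ν : Measure ℝ) [IsFiniteMeasure μ] [IsFiniteMeasure ν] (x : ℝ) :
    Dem (μ + ν) x = Dem μ x + Dem ν x := by
  rw [Dem, Measure.add_apply, ENNReal.toReal_add (measure_ne_top _ _) (measure_ne_top _ _)]
  rfl

theorem Dem_smul (c : ENNReal) (μ : Measure ℝ) (x : ℝ) : Dem (c • μ) x = c.toReal * Dem μ x := by
  simp [Dem, ENNReal.toReal_mul]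

theorem Dem_dirac (p x : ℝ) : Dem (Measure.dirac p) x = if x ≤ p then 1 else 0 := by
  by_cases h : x ≤ p <;> simp [Dem, Measure.dirac_apply, h]

theorem Dem_antitone (μ : Measure ℝ) [IsFiniteMeasure μ] : Antitone (Dem μ) :=
  fun _ _ hxy => ENNReal.toReal_mono (measure_ne_top _ _)
    (measure_mono fun _ hv => le_trans hxy hv)

theorem EW_add (lam : ℝ) (μ ν : Measure ℝ) [IsFiniteMeasure μ] [IsFiniteMeasure ν] (x : ℝ) :
    EW lam (μ + ν) x = EW lam μ x + EW lam ν x := by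
  simp only [EW, Dem_add]
  rw [intervalIntegral.integral_add (Dem_antitone μ).intervalIntegrable
    (Dem_antitone ν).intervalIntegrable]
  ring

theorem EW_smul (lam : ℝ) (c : ENNReal) (μ : Measure ℝ) (x : ℝ) :
    EW lam (c • μ) x = c.toReal * EW lam μ x := by
  simp only [EW, Dem_smul, intervalIntegral.integral_const_mul]
  ring

theorem integral_Dem_dirac {p : ℝ} (hp : p ≤ 1) (x : ℝ) :
    ∫ t in x..1, Dem (Measure.dirac p) t = if x ≤ p then p - x else 0 := by
  have hint : ∀ a b, IntervalIntegrable (Dem (Measure.dirac p)) volume a b :=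
    fun _ _ => (Dem_antitone _).intervalIntegrable
  split_ifs with hxp
  · have below : ∫ t in x..p, Dem (Measure.dirac p) t = (p - x) * 1 :=
      intervalIntegral_eq_of_forall_mem_uIoc fun t ht => by
        rw [uIoc_of_le hxp] at ht
        rw [Dem_dirac, if_pos ht.2]
    have above : ∫ t in p..1, Dem (Measure.dirac p) t = (1 - p) * 0 :=
      intervalIntegral_eq_of_forall_mem_uIoc fun t ht => by
        rw [uIoc_of_le hp] at ht
        rw [Dem_dirac, if_neg (not_le.2 ht.1)]
    rw [← intervalIntegral.integral_add_adjacent_intervals (hint x p) (hint p 1), below, above]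
    ring
  · rw [intervalIntegral_eq_of_forall_mem_uIoc (c := 0), mul_zero]
    intro t ht
    rw [Dem_dirac, if_neg (not_le.2 ((le_min (not_le.1 hxp).le hp).trans_lt ht.1))]

noncomputable def atomWelfare (lam p x : ℝ) : ℝ := if x ≤ p then x + lam * (p - x) else 0

theorem EW_dirac (lam : ℝ) {p : ℝ} (hp : p ≤ 1) (x : ℝ) :
    EW lam (Measure.dirac p) x = atomWelfare lam p x := by
  rw [EW, Dem_dirac, integral_Dem_dirac hp, atomWelfare]
  split_ifs <;> ring

theorem aC_nonneg {lam : ℝ} (h1 : lam ≤ 1) : 0 ≤ aC lam :=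
  div_nonneg (mul_nonneg (by linarith) (by linarith))
    (mul_nonneg (mul_nonneg zero_le_two (by linarith)) (by linarith))

theorem bC_nonneg {lam : ℝ} (h1 : lam ≤ 1) : 0 ≤ bC lam :=
  div_nonneg (by linarith) (mul_nonneg zero_le_two (by linarith))

theorem one_sub_aC_sub_two_bC {lam : ℝ} (h1 : lam ≤ 1) :
    1 - aC lam - 2 * bC lam
      = (48 - 31 * lam - 3 * lam ^ 2) / (2 * (4 - 3 * lam) * (24 - 17 * lam)) := by
  -- `field_simp` looks for the denominators in its normal form `4 - lam * 3`
  have : 4 - lam * 3 ≠ 0 := by linarith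
  have : 24 - lam * 17 ≠ 0 := by linarith
  rw [aC, bC]
  field_simp
  ring

theorem one_sub_aC_sub_two_bC_nonneg {lam : ℝ} (h0 : 0 ≤ lam) (h1 : lam ≤ 1) :
    0 ≤ 1 - aC lam - 2 * bC lam := by
  rw [one_sub_aC_sub_two_bC h1]
  exact div_nonneg (by nlinarith) (mul_nonneg (mul_nonneg zero_le_two (by linarith)) (by linarith))

theorem EW_muEps {lam ε : ℝ} (h0 : 0 ≤ lam) (h1 : lam ≤ 1) (hε : ε ∈ Icc (-1 : ℝ) 1) (x : ℝ) :
    EW lam (muEps lam ε) x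
      = aC lam * atomWelfare lam (1/4) x + (1 + ε) * bC lam * atomWelfare lam (1/2) x
        + (1 - ε) * bC lam * atomWelfare lam (3/4) x
        + (1 - aC lam - 2 * bC lam) * atomWelfare lam 1 x := by
  have hb := bC_nonneg h1
  rw [muEps, EW_add, EW_add, EW_add, EW_smul, EW_smul, EW_smul, EW_smul,
    EW_dirac lam (by norm_num : (1/4 : ℝ) ≤ 1), EW_dirac lam (by norm_num : (1/2 : ℝ) ≤ 1),
    EW_dirac lam (by norm_num : (3/4 : ℝ) ≤ 1), EW_dirac lam le_rfl,
    ENNReal.toReal_ofReal (aC_nonneg h1),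
    ENNReal.toReal_ofReal (mul_nonneg (by linarith [hε.1]) hb),
    ENNReal.toReal_ofReal (mul_nonneg (by linarith [hε.2]) hb),
    ENNReal.toReal_ofReal (one_sub_aC_sub_two_bC_nonneg h0 h1)]

theorem EW_muEps_one_quarter_le {lam ε : ℝ} (h0 : 0 ≤ lam) (h1 : lam ≤ 1)
    (hε : ε ∈ Icc (-1 : ℝ) 1) :
    EW lam (muEps lam 1) (1/4) ≤ EW lam (muEps lam ε) (1/4) := by
  rw [EW_muEps h0 h1 ⟨by norm_num, le_rfl⟩, EW_muEps h0 h1 hε]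
  norm_num [atomWelfare]
  nlinarith [mul_nonneg (mul_nonneg h0 (sub_nonneg.2 hε.2)) (bC_nonneg h1)]

theorem EW_muEps_one_quarter_le_one {lam ε : ℝ} (h0 : 0 ≤ lam) (h1 : lam ≤ 1)
    (hε : ε ∈ Icc (-1 : ℝ) 1) :
    EW lam (muEps lam 1) (1/4) ≤ EW lam (muEps lam ε) 1 := by
  rw [EW_muEps h0 h1 ⟨by norm_num, le_rfl⟩, EW_muEps h0 h1 hε]
  norm_num [atomWelfare]
  rw [← sub_nonneg]
  have : 4 - lam * 3 ≠ 0 := by linarith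
  have : 24 - lam * 17 ≠ 0 := by linarith
  calc (0 : ℝ) ≤ lam * (1 - lam) / (8 * (24 - 17 * lam)) :=
        div_nonneg (mul_nonneg h0 (by linarith)) (by linarith)
    _ = _ := by rw [aC, bC]; field_simp; ring

theorem EW_muEps_le_neg_one_three_quarters {lam ε x : ℝ} (h0 : 0 ≤ lam) (h1 : lam ≤ 1)
    (hε : ε ∈ Icc (-1 : ℝ) 1) (hx : x ∈ Ioc (1/2 : ℝ) (3/4)) :
    EW lam (muEps lam ε) x ≤ EW lam (muEps lam (-1)) (3/4) := by
  rw [EW_muEps h0 h1 hε, EW_muEps h0 h1 ⟨le_rfl, by norm_num⟩]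
  simp only [atomWelfare, if_neg (by linarith [hx.1] : ¬ x ≤ 1/4),
    if_neg (by linarith [hx.1] : ¬ x ≤ 1/2), if_pos hx.2, if_pos (by linarith [hx.2] : x ≤ 1)]
  norm_num
  have hb := bC_nonneg h1
  have hc := one_sub_aC_sub_two_bC_nonneg h0 h1
  have hslack := mul_nonneg (sub_nonneg.2 h1) (sub_nonneg.2 hx.2)
  gcongr ?_ * _ * ?_ + _ * ?_
  · exact add_nonneg (by linarith [hx.1]) (mul_nonneg h0 (by linarith [hx.2]))
  · linarith [hε.1]
  · nlinarith
  · nlinarith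

theorem EW_muEps_gap {lam : ℝ} (h0 : 0 ≤ lam) (h1 : lam < 1) :
    EW lam (muEps lam 1) (1/4) - EW lam (muEps lam (-1)) (3/4)
      = 1/8 * ((1 - lam) / (4 - 3 * lam)) := by
  rw [EW_muEps h0 h1.le ⟨by norm_num, le_rfl⟩, EW_muEps h0 h1.le ⟨le_rfl, by norm_num⟩]
  have : 4 - lam * 3 ≠ 0 := by linarith
  have : 24 - lam * 17 ≠ 0 := by linarith
  norm_num [atomWelfare, aC, bC]
  field_simp
  ring

/-- Extremal welfare values over the lower-bound family: for `λ ∈ (0,1)`,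
`min_{ε∈[−1,1]} min(W^ε(1/4), W^ε(1)) = W^1(1/4)`,
`max_{ε∈[−1,1]} max_{x∈(1/2,3/4]} W^ε(x) = W^{−1}(3/4)`, and
`W^1(1/4) − W^{−1}(3/4) = (1/8)(1−λ)/(4−3λ) > 0`. -/
theorem extremal_welfare_lower_bound_family (lam : ℝ) (hlam : lam ∈ Ioo (0:ℝ) 1) :
    (⨅ ε : Icc (-1:ℝ) 1,
        min (EW lam (muEps lam ε.1) (1/4)) (EW lam (muEps lam ε.1) 1))
      = EW lam (muEps lam 1) (1/4) ∧
    (⨆ ε : Icc (-1:ℝ) 1, ⨆ x : Ioc (1/2 : ℝ) (3/4), EW lam (muEps lam ε.1) x.1)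
      = EW lam (muEps lam (-1)) (3/4) ∧
    EW lam (muEps lam 1) (1/4) - EW lam (muEps lam (-1)) (3/4)
      = 1/8 * ((1 - lam) / (4 - 3 * lam)) ∧
    0 < 1/8 * ((1 - lam) / (4 - 3 * lam)) := by
  obtain ⟨h0, h1⟩ := hlam
  have hone : (1 : ℝ) ∈ Icc (-1 : ℝ) 1 := ⟨by norm_num, le_rfl⟩
  have hnegone : (-1 : ℝ) ∈ Icc (-1 : ℝ) 1 := ⟨le_rfl, by norm_num⟩
  have : Nonempty (Icc (-1 : ℝ) 1) := ⟨⟨1, hone⟩⟩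
  refine ⟨?_, ?_, EW_muEps_gap h0.le h1,
    mul_pos (by norm_num) (div_pos (by linarith) (by linarith))⟩
  · apply IsGLB.ciInf_eq
    refine IsLeast.isGLB ⟨⟨⟨1, hone⟩, ?_⟩, ?_⟩
    · exact min_eq_left (EW_muEps_one_quarter_le_one h0.le h1.le hone)
    · rintro _ ⟨ε, rfl⟩
      exact le_min (EW_muEps_one_quarter_le h0.le h1.le ε.2)
        (EW_muEps_one_quarter_le_one h0.le h1.le ε.2)
  · have hmem : (3/4 : ℝ) ∈ Ioc (1/2 : ℝ) (3/4) := by norm_num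
    exact ciSup₂_eq_of_forall_le (f := fun (ε : Icc (-1 : ℝ) 1) (x : Ioc (1/2 : ℝ) (3/4)) =>
      EW lam (muEps lam ε.1) x.1) ⟨-1, hnegone⟩ ⟨3/4, hmem⟩
      fun ε x => EW_muEps_le_neg_one_three_quarters h0.le h1.le ε.2 x.2
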